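/- arXiv:2605.17376 — 7 statements merged into one kernel-verified Lean document; each statement's English description precedes it below -/
import Mathlib

section
/- Let Γ be a finite k-regular graph, π = {V₁,…,Vₘ} an equitable partition with quotient matrix M_π, and W₁ an (a,b)-perfect set in Γ. Define h_t = |V_t ∩ W₁|/|V_t| − b/(k−a+b) for 1 ≤ t ≤ m. Then the vector (h₁,…,hₘ) satisfies (M_π + (b−a)·I)·h = 0. -/
open Finset

private lemma sum_adj_symm {V : Type*} [Fintype V] [DecidableEq V]
    (G : SimpleGraph V) [DecidableRel G.Adj] (s t : Finset V) :
    ∑ v ∈ s, (G.neighborFinset v ∩ t).card = ∑ u ∈ t, (G.neighborFinset u ∩ s).card := by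
  have key : ∀ (s t : Finset V), ∑ v ∈ s, (G.neighborFinset v ∩ t).card
      = ∑ v ∈ s, ∑ u ∈ t, if G.Adj v u then 1 else 0 := by
    intro s t
    refine Finset.sum_congr rfl fun v _ => ?_
    have : G.neighborFinset v ∩ t = t.filter (fun u => G.Adj v u) := by
      ext u; simp [and_comm]
    rw [this, Finset.card_filter]
  rw [key, key, Finset.sum_comm]
  refine Finset.sum_congr rfl fun u _ => Finset.sum_congr rfl fun v _ => ?_
  simp [G.adj_comm]

private lemma sum_partition {V : Type*} [Fintype V] [DecidableEq V]
    {m : ℕ} (P : Fin m → Finset V)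
    (hdisj : ∀ i j, i ≠ j → Disjoint (P i) (P j))
    (hcover : ∀ v : V, ∃ i, v ∈ P i)
    (s : Finset V) (f : V → ℕ) :
    ∑ j, ∑ u ∈ s ∩ P j, f u = ∑ u ∈ s, f u := by
  have : ∀ j, ∑ u ∈ s ∩ P j, f u = ∑ u ∈ s, if u ∈ P j then f u else 0 := by
    intro j
    rw [← Finset.sum_filter, Finset.filter_mem_eq_inter]
  simp_rw [this]
  rw [Finset.sum_comm]
  refine Finset.sum_congr rfl fun u hu => ?_
  obtain ⟨j₀, hj₀⟩ := hcover u
  rw [Finset.sum_eq_single_of_mem j₀ (Finset.mem_univ _)]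
  · simp [hj₀]
  · intro j _ hj
    have : u ∉ P j := fun h => Finset.disjoint_left.mp (hdisj j j₀ hj) h hj₀
    simp [this]

theorem stmt_4 {V : Type*} [Fintype V] [DecidableEq V]
    (G : SimpleGraph V) [DecidableRel G.Adj] (k a b : ℕ)
    (hk : 1 ≤ k) (hreg : G.IsRegularOfDegree k) (hconn : G.Connected)
    (ha : a ≤ k - 1) (hb : 1 ≤ b) (hbk : b ≤ k)
    (m : ℕ) (P : Fin m → Finset V) (B : Fin m → Fin m → ℕ)
    (hdisj : ∀ i j, i ≠ j → Disjoint (P i) (P j))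
    (hcover : ∀ v : V, ∃ i, v ∈ P i)
    (hnonempty : ∀ i, (P i).Nonempty)
    (hequit : ∀ i j, ∀ v ∈ P i, (G.neighborFinset v ∩ P j).card = B i j)
    (W₁ : Finset V) (hne : W₁.Nonempty) (hproper : W₁ ≠ Finset.univ)
    (hA : ∀ v ∈ W₁, (G.neighborFinset v ∩ W₁).card = a)
    (hB : ∀ v ∉ W₁, (G.neighborFinset v ∩ W₁).card = b) :
    (Matrix.of (fun i j => (B i j : ℝ)) + ((b : ℝ) - a) • (1 : Matrix (Fin m) (Fin m) ℝ)).mulVec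
      (fun t => ((P t ∩ W₁).card : ℝ) / (P t).card - (b : ℝ) / ((k : ℝ) - a + b)) = 0 := by
  -- notation
  set h : Fin m → ℝ := fun t => ((P t ∩ W₁).card : ℝ) / (P t).card - (b : ℝ) / ((k : ℝ) - a + b)
    with hh
  have hak : a < k := lt_of_le_of_lt ha (Nat.sub_lt hk one_pos)
  have hdpos : (0 : ℝ) < (k : ℝ) - a + b := by
    have h1 : (a : ℝ) < k := by exact_mod_cast hak
    have h2 : (0 : ℝ) < b := by exact_mod_cast hb
    linarith
  have hd : ((k : ℝ) - a + b) ≠ 0 := ne_of_gt hdpos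
  have hncard : ∀ i, (0 : ℝ) < (P i).card := fun i => by
    exact_mod_cast Finset.card_pos.mpr (hnonempty i)
  have hn : ∀ i, ((P i).card : ℝ) ≠ 0 := fun i => ne_of_gt (hncard i)
  -- row sums: ∑ j, B i j = k
  have hrow : ∀ i, ∑ j, B i j = k := by
    intro i
    obtain ⟨v, hv⟩ := hnonempty i
    have := sum_partition P hdisj hcover (G.neighborFinset v) (fun _ => 1)
    simp only [Finset.sum_const, smul_eq_mul, mul_one] at this
    calc ∑ j, B i j = ∑ j, (G.neighborFinset v ∩ P j).card := by
          refine Finset.sum_congr rfl fun j _ => (hequit i j v hv).symm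
      _ = (G.neighborFinset v).card := this
      _ = k := by rw [G.card_neighborFinset_eq_degree]; exact hreg v
  -- symmetry: B i j * |P i| = B j i * |P j|
  have hsym : ∀ i j, B i j * (P i).card = B j i * (P j).card := by
    intro i j
    have h1 : ∑ v ∈ P i, (G.neighborFinset v ∩ P j).card = B i j * (P i).card := by
      rw [Finset.sum_congr rfl fun v hv => hequit i j v hv, Finset.sum_const, smul_eq_mul,
        mul_comm]
    have h2 : ∑ v ∈ P j, (G.neighborFinset v ∩ P i).card = B j i * (P j).card := by
      rw [Finset.sum_congr rfl fun v hv => hequit j i v hv, Finset.sum_const, smul_eq_mul,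
        mul_comm]
    rw [← h1, ← h2, sum_adj_symm]
  -- edge count: ∑ j, B j i * |P j ∩ W₁| = a * |P i ∩ W₁| + b * |P i \ W₁|
  have hedge : ∀ i, ∑ j, B j i * (P j ∩ W₁).card
      = a * (P i ∩ W₁).card + b * (P i \ W₁).card := by
    intro i
    have stepA : ∑ v ∈ P i, (G.neighborFinset v ∩ W₁).card
        = a * (P i ∩ W₁).card + b * (P i \ W₁).card := by
      rw [← Finset.sum_inter_add_sum_sdiff (P i) W₁ (fun v => (G.neighborFinset v ∩ W₁).card)]
      congr 1
      · rw [Finset.sum_congr rfl fun v hv => hA v (Finset.mem_inter.mp hv).2,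
          Finset.sum_const, smul_eq_mul, mul_comm]
      · rw [Finset.sum_congr rfl fun v hv => hB v (Finset.mem_sdiff.mp hv).2,
          Finset.sum_const, smul_eq_mul, mul_comm]
    have stepB : ∑ v ∈ P i, (G.neighborFinset v ∩ W₁).card
        = ∑ j, B j i * (P j ∩ W₁).card := by
      rw [sum_adj_symm, ← sum_partition P hdisj hcover W₁ (fun u => (G.neighborFinset u ∩ P i).card)]
      refine Finset.sum_congr rfl fun j _ => ?_
      rw [Finset.sum_congr rfl fun u hu => hequit j i u (Finset.mem_inter.mp hu).2,
        Finset.sum_const, smul_eq_mul, mul_comm, Finset.inter_comm]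
    rw [← stepB, stepA]
  -- now the real computation
  funext i
  have expand : (Matrix.of (fun i j => (B i j : ℝ))
      + ((b : ℝ) - a) • (1 : Matrix (Fin m) (Fin m) ℝ)).mulVec h i
      = (∑ j, (B i j : ℝ) * h j) + ((b : ℝ) - a) * h i := by
    rw [Matrix.add_mulVec, Matrix.smul_mulVec, Matrix.one_mulVec]
    simp [Matrix.mulVec, dotProduct]
  rw [Pi.zero_apply, expand]
  -- rewrite ∑ j B i j * h j
  have key1 : ∀ j, (B i j : ℝ) * (((P j ∩ W₁).card : ℝ) / (P j).card)
      = (B j i : ℝ) * ((P j ∩ W₁).card : ℝ) / (P i).card := by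
    intro j
    have hs : (B i j : ℝ) * (P i).card = (B j i : ℝ) * (P j).card := by
      exact_mod_cast hsym i j
    field_simp
    nlinarith [hs]
  have split : ∑ j, (B i j : ℝ) * h j
      = (∑ j, (B j i : ℝ) * ((P j ∩ W₁).card : ℝ)) / (P i).card
        - (k : ℝ) * ((b : ℝ) / ((k : ℝ) - a + b)) := by
    rw [hh]
    simp only [mul_sub]
    rw [Finset.sum_sub_distrib, ← Finset.sum_mul, Finset.sum_div]
    congr 1
    · exact Finset.sum_congr rfl fun j _ => key1 j
    · congr 1
      exact_mod_cast hrow i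
  rw [split]
  have hedgeR : ∑ j, (B j i : ℝ) * ((P j ∩ W₁).card : ℝ)
      = (a : ℝ) * ((P i ∩ W₁).card : ℝ) + (b : ℝ) * (((P i).card : ℝ) - ((P i ∩ W₁).card : ℝ)) := by
    have hsub : ((P i \ W₁).card : ℝ) = ((P i).card : ℝ) - ((P i ∩ W₁).card : ℝ) := by
      have h0 : (P i ∩ W₁).card + (P i \ W₁).card = (P i).card :=
        Finset.card_inter_add_card_sdiff (P i) W₁
      have h1 : ((P i ∩ W₁).card : ℝ) + ((P i \ W₁).card : ℝ) = ((P i).card : ℝ) := by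
        exact_mod_cast h0
      linarith
    rw [← hsub]
    exact_mod_cast hedge i
  rw [hedgeR, hh]
  have hc : ((b : ℝ) / ((k : ℝ) - a + b)) * ((k : ℝ) - a + b) = b := div_mul_cancel₀ _ hd
  field_simp
  ring
end

section
/- Let Γ be a finite k-regular graph with an equitable partition π with quotient matrix M_π, and let W₁ be an (a,b)-perfect set. If a−b is not an eigenvalue of M_π, then for every part V_t of π, |V_t ∩ W₁|/|V_t| = b/(k−a+b). -/
open Finset

theorem stmt_5 {V : Type*} [Fintype V] [DecidableEq V]
    (G : SimpleGraph V) [DecidableRel G.Adj] (k a b : ℕ)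
    (hk : 1 ≤ k) (hreg : G.IsRegularOfDegree k) (hconn : G.Connected)
    (ha : a ≤ k - 1) (hb : 1 ≤ b) (hbk : b ≤ k)
    (m : ℕ) (P : Fin m → Finset V) (B : Fin m → Fin m → ℕ)
    (hdisj : ∀ i j, i ≠ j → Disjoint (P i) (P j))
    (hcover : ∀ v : V, ∃ i, v ∈ P i)
    (hnonempty : ∀ i, (P i).Nonempty)
    (hequit : ∀ i j, ∀ v ∈ P i, (G.neighborFinset v ∩ P j).card = B i j)
    (W₁ : Finset V) (hne : W₁.Nonempty) (hproper : W₁ ≠ Finset.univ)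
    (hA : ∀ v ∈ W₁, (G.neighborFinset v ∩ W₁).card = a)
    (hB : ∀ v ∉ W₁, (G.neighborFinset v ∩ W₁).card = b)
    (heig : ¬ ∃ x : Fin m → ℝ, x ≠ 0 ∧
      (Matrix.of (fun i j => (B i j : ℝ))).mulVec x = ((a : ℝ) - b) • x) :
    ∀ t, ((P t ∩ W₁).card : ℝ) / (P t).card = (b : ℝ) / ((k : ℝ) - a + b) := by
  classical
  -- partition summation helper
  have hpart : ∀ (S : Finset V) (f : V → ℕ),
      ∑ j, ∑ u ∈ S ∩ P j, f u = ∑ u ∈ S, f u := by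
    intro S f
    have h1 : ∀ j, S ∩ P j = S.filter (· ∈ P j) := by
      intro j; ext u; simp [Finset.mem_inter, Finset.mem_filter]
    simp_rw [h1, Finset.sum_filter]
    rw [Finset.sum_comm]
    refine Finset.sum_congr rfl fun u hu => ?_
    obtain ⟨i, hi⟩ := hcover u
    rw [Finset.sum_eq_single i]
    · simp [hi]
    · intro j _ hj
      have : u ∉ P j := fun h => (Finset.disjoint_left.mp (hdisj j i hj)) h hi
      simp [this]
    · simp
  -- double counting of edges
  have hedge : ∀ (S T : Finset V),
      ∑ u ∈ S, (G.neighborFinset u ∩ T).card = ∑ v ∈ T, (G.neighborFinset v ∩ S).card := by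
    intro S T
    have h1 : ∀ (u : V) (T : Finset V),
        (G.neighborFinset u ∩ T).card = ∑ v ∈ T, if G.Adj u v then 1 else 0 := by
      intro u T
      rw [← Finset.card_filter]
      congr 1
      ext v; simp [Finset.mem_inter, Finset.mem_filter, and_comm]
    simp_rw [h1]
    rw [Finset.sum_comm]
    refine Finset.sum_congr rfl fun v _ => Finset.sum_congr rfl fun u _ => ?_
    simp [G.adj_comm u v]
  have hak : a < k := by omega
  have hakR : (a : ℝ) < k := by exact_mod_cast hak
  have hbR : (0 : ℝ) < b := by exact_mod_cast hb
  set d : ℝ := (k : ℝ) - a + b with hd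
  have hdpos : 0 < d := by rw [hd]; linarith
  set c : ℝ := (b : ℝ) / d with hc
  set w : Fin m → ℝ := fun s => ((P s ∩ W₁).card : ℝ) with hw
  set p : Fin m → ℝ := fun s => ((P s).card : ℝ) with hp
  -- row sums
  have hrow : ∀ i, ∑ j, (B i j : ℝ) = (k : ℝ) := by
    intro i
    obtain ⟨v, hv⟩ := hnonempty i
    have : ∑ j, B i j = k := by
      have h1 : ∀ j, B i j = (G.neighborFinset v ∩ P j).card := fun j => (hequit i j v hv).symm
      simp_rw [h1]
      have h2 : ∑ j, (G.neighborFinset v ∩ P j).card = (G.neighborFinset v).card := by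
        simpa using hpart (G.neighborFinset v) (fun _ => 1)
      rw [h2]
      exact hreg v
    exact_mod_cast this
  -- symmetry
  have hsym : ∀ s t, (B s t : ℝ) * p s = (B t s : ℝ) * p t := by
    intro s t
    have h1 : ∑ u ∈ P s, (G.neighborFinset u ∩ P t).card = (P s).card * B s t := by
      rw [Finset.sum_congr rfl (fun u hu => hequit s t u hu), Finset.sum_const, smul_eq_mul]
    have h2 : ∑ v ∈ P t, (G.neighborFinset v ∩ P s).card = (P t).card * B t s := by
      rw [Finset.sum_congr rfl (fun v hv => hequit t s v hv), Finset.sum_const, smul_eq_mul]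
    have h3 : (P s).card * B s t = (P t).card * B t s := by rw [← h1, ← h2, hedge]
    have h4 : ((P s).card : ℝ) * B s t = ((P t).card : ℝ) * B t s := by exact_mod_cast h3
    simp only [hp]; linarith
  -- the key counting identity
  have hkey : ∀ t, ∑ s, (B s t : ℝ) * w s = ((a : ℝ) - b) * w t + b * p t := by
    intro t
    have hwle : (P t ∩ W₁).card ≤ (P t).card := Finset.card_le_card Finset.inter_subset_left
    have h1 : ∑ s, B s t * (W₁ ∩ P s).card
        = ∑ u ∈ W₁, (G.neighborFinset u ∩ P t).card := by
      rw [← hpart W₁ (fun u => (G.neighborFinset u ∩ P t).card)]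
      refine Finset.sum_congr rfl fun s _ => ?_
      rw [Finset.sum_congr rfl
        (fun u hu => hequit s t u (Finset.mem_inter.mp hu).2), Finset.sum_const, smul_eq_mul,
        mul_comm]
    have h2 : ∑ v ∈ P t, (G.neighborFinset v ∩ W₁).card
        = a * (P t ∩ W₁).card + b * ((P t).card - (P t ∩ W₁).card) := by
      rw [← Finset.sum_inter_add_sum_sdiff (P t) W₁ (fun v => (G.neighborFinset v ∩ W₁).card)]
      congr 1
      · rw [Finset.sum_congr rfl (fun v hv => hA v (Finset.mem_inter.mp hv).2),
          Finset.sum_const, smul_eq_mul, mul_comm]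
      · rw [Finset.sum_congr rfl (fun v hv => hB v (Finset.mem_sdiff.mp hv).2),
          Finset.sum_const, smul_eq_mul, mul_comm]
        have h5 : (P t \ W₁).card = (P t).card - (P t ∩ W₁).card := by
          have := Finset.card_inter_add_card_sdiff (P t) W₁
          omega
        rw [h5]
    have h3 : ∑ s, B s t * (P s ∩ W₁).card
        = a * (P t ∩ W₁).card + b * ((P t).card - (P t ∩ W₁).card) := by
      rw [← h2, ← hedge]
      rw [← h1]
      refine Finset.sum_congr rfl fun s _ => ?_
      rw [Finset.inter_comm]
    have h4 : (∑ s, (B s t : ℝ) * w s)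
        = (a : ℝ) * w t + b * (p t - w t) := by
      have := congrArg (Nat.cast : ℕ → ℝ) h3
      push_cast [Nat.cast_sub hwle] at this
      simpa only [hw, hp] using this
    rw [h4]; ring
  -- eigenvector
  set y : Fin m → ℝ := fun s => w s - c * p s with hy
  have hyzero : y = 0 := by
    by_contra hy0
    set M : Matrix (Fin m) (Fin m) ℝ := Matrix.of (fun i j => (B i j : ℝ)) with hM
    have hmul : (M.transpose - ((a : ℝ) - b) • 1).mulVec y = 0 := by
      funext t
      have hBp : ∑ s, (B s t : ℝ) * p s = (k : ℝ) * p t := by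
        rw [Finset.sum_congr rfl (fun s _ => hsym s t), ← Finset.sum_mul, hrow]
      have hcd : c * ((k : ℝ) - a + b) = b := by
        rw [hc, ← hd]; field_simp
      have hsum : ∑ s, (B s t : ℝ) * y s
          = (∑ s, (B s t : ℝ) * w s) - c * ∑ s, (B s t : ℝ) * p s := by
        rw [Finset.mul_sum, ← Finset.sum_sub_distrib]
        refine Finset.sum_congr rfl fun s _ => ?_
        simp only [hy]; ring
      have : ∑ s, (B s t : ℝ) * y s = ((a : ℝ) - b) * y t := by
        rw [hsum, hBp, hkey t]
        simp only [hy]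
        linear_combination (-(p t)) * hcd
      simp only [Matrix.sub_mulVec, Matrix.smul_mulVec, Matrix.one_mulVec,
        Pi.sub_apply, Pi.smul_apply, smul_eq_mul, Pi.zero_apply]
      rw [sub_eq_zero, ← this]
      simp [Matrix.mulVec, dotProduct, Matrix.transpose_apply, hM, mul_comm]
    have hdet : (M.transpose - ((a : ℝ) - b) • 1).det = 0 := by
      rw [← Matrix.exists_mulVec_eq_zero_iff]
      exact ⟨y, hy0, hmul⟩
    have hdet2 : (M - ((a : ℝ) - b) • 1).det = 0 := by
      have : (M.transpose - ((a : ℝ) - b) • 1) = (M - ((a : ℝ) - b) • 1).transpose := by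
        rw [Matrix.transpose_sub, Matrix.transpose_smul, Matrix.transpose_one]
      rw [this, Matrix.det_transpose] at hdet
      exact hdet
    obtain ⟨x, hx0, hx⟩ := (Matrix.exists_mulVec_eq_zero_iff).mpr hdet2
    refine heig ⟨x, hx0, ?_⟩
    have := hx
    rw [Matrix.sub_mulVec, Matrix.smul_mulVec, Matrix.one_mulVec, sub_eq_zero] at this
    exact this
  intro t
  have hyt : w t - c * p t = 0 := by
    have := congrFun hyzero t
    simpa [hy] using this
  have hpt : p t ≠ 0 := by
    have := (hnonempty t).card_pos
    simp only [hp]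
    positivity
  have hwt : w t = c * p t := by linarith
  simp only [hw, hp] at hwt hpt
  rw [hwt, mul_div_assoc, div_self hpt, mul_one]
end

section
/- If Cay(G,S) is a normal Cayley graph and χ is an irreducible character of G, then χ (viewed as an element of the space of class functions) is an eigenvector of the adjacency operator restricted to class functions, with eigenvalue (1/χ(1))·Σ_{g∈S} χ(g). -/
/-!
Since `S` is a union of conjugacy classes, `∑_{g ∈ S} ρ(g)` commutes with every `ρ(y)`, so by
Schur's lemma it acts on the irreducible `V` as a scalar `c`. Taking the trace of
`(∑_{g ∈ S} ρ(g)) ρ(x) = c ρ(x)` gives `∑_{g ∈ S} χ(g x) = c χ(x)`, and `x = 1` identifies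
`c = (∑_{g ∈ S} χ(g)) / χ(1)`.
-/

open Finset CategoryTheory

theorem MonoidHom.commute_sum_map_of_conj_mem {G A : Type*} [Group G] [Semiring A] (f : G →* A)
    {S : Finset G} (hS : ∀ g ∈ S, ∀ x : G, x * g * x⁻¹ ∈ S) (y : G) :
    Commute (∑ g ∈ S, f g) (f y) := by
  have hconj : ∑ g ∈ S, f (y * g) = ∑ g ∈ S, f (g * y) :=
    sum_nbij' (fun g => y * g * y⁻¹) (fun g => y⁻¹ * g * y)
      (fun g hg => hS g hg y) (fun g hg => by simpa using hS g hg y⁻¹)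
      (fun g _ => by group) (fun g _ => by group) (fun g _ => by group)
  simp only [Commute, SemiconjBy, sum_mul, mul_sum, ← map_mul, hconj]

namespace FDRep

variable {k G : Type*} [Field k] [Monoid G]

theorem exists_eq_smul_one_of_commute [IsAlgClosed k] (V : FDRep k G) [Simple V]
    (T : Module.End k V) (hT : ∀ g, Commute T (V.ρ g)) : ∃ c : k, T = c • 1 := by
  let φ : V ⟶ V :=
    ⟨InducedCategory.homMk (ModuleCat.ofHom T), fun g => FGModuleCat.hom_ext (hT g).eq⟩
  obtain ⟨c, hc⟩ := endomorphism_simple_eq_smul_id k φ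
  exact ⟨c, congrArg (fun f : V ⟶ V => f.hom.hom.hom) hc.symm⟩

theorem nontrivial_of_simple (V : FDRep k G) [Simple V] : Nontrivial V := by
  by_contra h
  rw [not_nontrivial_iff_subsingleton] at h
  exact id_nonzero V <|
    Action.Hom.ext <| FGModuleCat.hom_ext <| LinearMap.ext fun _ => Subsingleton.elim _ _

theorem character_one_ne_zero [CharZero k] (V : FDRep k G) [Simple V] : V.character 1 ≠ 0 := by
  have := nontrivial_of_simple V
  rw [char_one]
  exact_mod_cast Module.finrank_pos.ne'

theorem sum_character_mul_eq_of_sum_eq_smul (V : FDRep k G) {S : Finset G} {c : k}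
    (hc : ∑ g ∈ S, V.ρ g = c • 1) (x : G) :
    ∑ g ∈ S, V.character (g * x) = c * V.character x := by
  simp only [character, map_mul, ← map_sum, ← sum_mul, hc, smul_mul_assoc, one_mul,
    map_smul, smul_eq_mul]

end FDRep

theorem stmt_12_general {G : Type} [Group G]
    (S : Finset G)
    (hconj : ∀ g ∈ S, ∀ x : G, x * g * x⁻¹ ∈ S)
    (V : FDRep ℂ G) (hirr : CategoryTheory.Simple V) :
    ∀ x : G, ∑ g ∈ S, V.character (g * x)
      = ((∑ g ∈ S, V.character g) / V.character 1) * V.character x := by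
  intro x
  obtain ⟨c, hc⟩ := V.exists_eq_smul_one_of_commute _ (V.ρ.commute_sum_map_of_conj_mem hconj)
  have hsum := V.sum_character_mul_eq_of_sum_eq_smul hc
  have hc_eq : ∑ g ∈ S, V.character g = c * V.character 1 := by simpa using hsum 1
  rw [hsum x, hc_eq, mul_div_cancel_right₀ _ V.character_one_ne_zero]

theorem stmt_12 {G : Type} [Group G] [Fintype G] [DecidableEq G]
    (S : Finset G) (h1 : (1 : G) ∉ S) (hinv : ∀ g ∈ S, g⁻¹ ∈ S)
    (hconj : ∀ g ∈ S, ∀ x : G, x * g * x⁻¹ ∈ S)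
    (V : FDRep ℂ G) (hirr : CategoryTheory.Simple V) :
    ∀ x : G, ∑ g ∈ S, V.character (g * x)
      = ((∑ g ∈ S, V.character g) / V.character 1) * V.character x :=
  stmt_12_general S hconj V hirr
end

section
/- Let Γ be a finite vertex-transitive k-regular graph admitting an (a,b)-perfect set W₁, and let r be the dimension of the span of the vectors {𝟙_{W₁^x} : x ∈ Aut(Γ)} in ℂ^V. Then the multiplicity of a−b as an eigenvalue of the adjacency matrix of Γ is at least r − 1. -/
open Finset

theorem stmt_13 {V : Type*} [Fintype V] [DecidableEq V]
    (G : SimpleGraph V) [DecidableRel G.Adj] (k a b : ℕ)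
    (hreg : G.IsRegularOfDegree k)
    (htrans : ∀ u v : V, ∃ x : G ≃g G, x u = v)
    (ha : a ≤ k - 1) (hb : 1 ≤ b) (hbk : b ≤ k)
    (W₁ : Finset V) (hne : W₁.Nonempty) (hproper : W₁ ≠ Finset.univ)
    (hA : ∀ v ∈ W₁, (G.neighborFinset v ∩ W₁).card = a)
    (hB : ∀ v ∉ W₁, (G.neighborFinset v ∩ W₁).card = b) :
    Module.finrank ℝ (Submodule.span ℝ
        {f : V → ℝ | ∃ x : G ≃g G, f = fun v => if v ∈ W₁.image x then (1 : ℝ) else 0}) - 1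
      ≤ Module.finrank ℝ
        (Module.End.eigenspace (Matrix.toLin' (G.adjMatrix ℝ)) ((a : ℝ) - b)) := by
  classical
  obtain ⟨v0, hv0⟩ := hne
  haveI : Nonempty V := ⟨v0⟩
  set n := Fintype.card V with hn
  set m := W₁.card with hm
  have hn0 : 0 < n := Fintype.card_pos
  have hmn : m ≤ n := by simpa [hn, hm] using Finset.card_le_univ W₁
  have haK : a ≤ k := by
    have h1 := hA v0 hv0
    have h2 : (G.neighborFinset v0 ∩ W₁).card ≤ (G.neighborFinset v0).card :=
      Finset.card_le_card Finset.inter_subset_left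
    rw [h1] at h2
    rwa [SimpleGraph.card_neighborFinset_eq_degree, hreg v0] at h2
  -- double counting
  have hfilter : ∀ (t : Finset V) (v : V),
      G.neighborFinset v ∩ t = t.filter (fun w => G.Adj v w) := by
    intro t v
    ext w
    simp [SimpleGraph.mem_neighborFinset, and_comm]
  have hswap : ∑ v ∈ W₁ᶜ, (G.neighborFinset v ∩ W₁).card
      = ∑ w ∈ W₁, (G.neighborFinset w ∩ W₁ᶜ).card := by
    simp only [hfilter, Finset.card_filter]
    rw [Finset.sum_comm]
    apply Finset.sum_congr rfl
    intro w _
    apply Finset.sum_congr rfl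
    intro v _
    simp [G.adj_comm]
  have hdc : b * (n - m) = (k - a) * m := by
    have h1 : ∑ v ∈ W₁ᶜ, (G.neighborFinset v ∩ W₁).card = b * (n - m) := by
      rw [Finset.sum_congr rfl (fun v hv => hB v (by simpa using hv))]
      simp [Finset.card_compl, hn, hm, mul_comm]
    have h2 : ∑ w ∈ W₁, (G.neighborFinset w ∩ W₁ᶜ).card = (k - a) * m := by
      have step : ∀ w ∈ W₁, (G.neighborFinset w ∩ W₁ᶜ).card = k - a := by
        intro w hw
        have hcap : (G.neighborFinset w ∩ W₁).card = a := hA w hw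
        have hdeg : (G.neighborFinset w).card = k := by
          rw [SimpleGraph.card_neighborFinset_eq_degree, hreg w]
        have heq : G.neighborFinset w ∩ W₁ᶜ = G.neighborFinset w \ W₁ := by
          ext u; simp [Finset.mem_sdiff]
        have hsum := Finset.card_inter_add_card_sdiff (G.neighborFinset w) W₁
        rw [heq]
        omega
      rw [Finset.sum_congr rfl step]
      simp [hm, mul_comm]
    rw [← h1, hswap, h2]
  have hkey : (b : ℝ) * n = m * ((k : ℝ) - a + b) := by
    have hc : (b : ℝ) * ((n : ℝ) - m) = ((k : ℝ) - a) * m := by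
      have := hdc
      push_cast [Nat.cast_sub hmn, Nat.cast_sub haK] at this ⊢
      exact_mod_cast this
    ring_nf at hc ⊢
    linarith
  set ones : V → ℝ := fun _ => (1 : ℝ) with hones
  set c : ℝ := (m : ℝ) / n with hc
  have hnR : (n : ℝ) ≠ 0 := Nat.cast_ne_zero.mpr hn0.ne'
  set E := Module.End.eigenspace (Matrix.toLin' (G.adjMatrix ℝ)) ((a : ℝ) - b) with hE
  have hsub : {f : V → ℝ | ∃ x : G ≃g G, f = fun v => if v ∈ W₁.image x then (1 : ℝ) else 0}
      ⊆ ↑(E ⊔ Submodule.span ℝ {ones}) := by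
    rintro f ⟨x, rfl⟩
    set W' := W₁.image x with hW'
    have hcard' : W'.card = m := Finset.card_image_of_injective _ x.injective
    have hN : ∀ w : V, G.neighborFinset (x w) = (G.neighborFinset w).image x := by
      intro w
      ext u
      simp only [Finset.mem_image, SimpleGraph.mem_neighborFinset]
      constructor
      · intro h
        refine ⟨x.symm u, ?_, x.apply_symm_apply u⟩
        have h2 : G.Adj (x w) (x (x.symm u)) := by rwa [x.apply_symm_apply]
        exact x.map_rel_iff.mp h2
      · rintro ⟨w', hw', rfl⟩
        exact x.map_rel_iff.mpr hw'
    have hA' : ∀ v ∈ W', (G.neighborFinset v ∩ W').card = a := by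
      intro v hv
      obtain ⟨w, hw, rfl⟩ := Finset.mem_image.mp hv
      rw [hN w, hW', ← Finset.image_inter _ _ x.injective,
        Finset.card_image_of_injective _ x.injective]
      exact hA w hw
    have hB' : ∀ v ∉ W', (G.neighborFinset v ∩ W').card = b := by
      intro v hv
      have hw : x.symm v ∉ W₁ := by
        intro h
        exact hv (Finset.mem_image.mpr ⟨x.symm v, h, x.apply_symm_apply v⟩)
      have hv' : v = x (x.symm v) := (x.apply_symm_apply v).symm
      rw [hv', hN (x.symm v), hW', ← Finset.image_inter _ _ x.injective,
        Finset.card_image_of_injective _ x.injective]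
      exact hB _ hw
    set f : V → ℝ := fun v => if v ∈ W' then (1 : ℝ) else 0 with hf
    set g : V → ℝ := fun v => f v - c with hg
    have hsum : ∀ v : V, ∑ u ∈ G.neighborFinset v, f u = ((G.neighborFinset v ∩ W').card : ℝ) := by
      intro v
      rw [hf]
      rw [Finset.sum_ite_mem]
      simp
    have hgE : g ∈ E := by
      rw [hE, Module.End.mem_eigenspace_iff]
      have : Matrix.toLin' (G.adjMatrix ℝ) g = (G.adjMatrix ℝ).mulVec g := Matrix.toLin'_apply _ _
      rw [this]
      funext v
      rw [SimpleGraph.adjMatrix_mulVec_apply]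
      have hsplit : ∑ u ∈ G.neighborFinset v, g u
          = (∑ u ∈ G.neighborFinset v, f u) - k * c := by
        simp only [hg, Finset.sum_sub_distrib, Finset.sum_const, nsmul_eq_mul]
        rw [SimpleGraph.card_neighborFinset_eq_degree, hreg v]
      rw [hsplit, hsum v]
      by_cases hv : v ∈ W'
      · rw [hA' v hv]
        have hgv : g v = 1 - c := by simp [hg, hf, hv]
        rw [Pi.smul_apply, hgv, smul_eq_mul, hc]
        field_simp
        nlinarith [hkey]
      · rw [hB' v hv]
        have hgv : g v = 0 - c := by simp [hg, hf, hv]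
        rw [Pi.smul_apply, hgv, smul_eq_mul, hc]
        field_simp
        nlinarith [hkey]
    have hdecomp : f = g + c • ones := by
      funext v
      simp [hg, hones]
    show f ∈ ↑(E ⊔ Submodule.span ℝ {ones})
    rw [hdecomp]
    exact Submodule.add_mem _ (Submodule.mem_sup_left hgE)
      (Submodule.mem_sup_right (Submodule.smul_mem _ _ (Submodule.mem_span_singleton_self ones)))
  have hle : Submodule.span ℝ
      {f : V → ℝ | ∃ x : G ≃g G, f = fun v => if v ∈ W₁.image x then (1 : ℝ) else 0}
      ≤ E ⊔ Submodule.span ℝ {ones} := Submodule.span_le.mpr hsub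
  have h1 := Submodule.finrank_mono hle
  have h2 := Submodule.finrank_add_le_finrank_add_finrank E (Submodule.span ℝ {ones})
  have hones0 : ones ≠ 0 := by
    intro h
    have := congrFun h v0
    simp [hones] at this
  have h3 : Module.finrank ℝ (Submodule.span ℝ {ones}) = 1 := finrank_span_singleton hones0
  omega
end

section
/- Let Γ be a finite vertex-transitive graph on vertex set V admitting an (a,b)-perfect set W₁, and let r be the dimension of the span of {𝟙_{W₁^x} : x ∈ Aut(Γ)}. Then r ≥ |V|/|W₁|. -/
open Finset

theorem stmt_14 {V : Type*} [Fintype V] [DecidableEq V]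
    (G : SimpleGraph V) [DecidableRel G.Adj] (k a b : ℕ)
    (hreg : G.IsRegularOfDegree k)
    (htrans : ∀ u v : V, ∃ x : G ≃g G, x u = v)
    (ha : a ≤ k - 1) (hb : 1 ≤ b) (hbk : b ≤ k)
    (W₁ : Finset V) (hne : W₁.Nonempty) (hproper : W₁ ≠ Finset.univ)
    (hA : ∀ v ∈ W₁, (G.neighborFinset v ∩ W₁).card = a)
    (hB : ∀ v ∉ W₁, (G.neighborFinset v ∩ W₁).card = b) :
    (Fintype.card V : ℝ) / W₁.card
      ≤ (Module.finrank ℝ (Submodule.span ℝ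
          {f : V → ℝ | ∃ x : G ≃g G, f = fun v => if v ∈ W₁.image x then (1 : ℝ) else 0}) : ℝ) := by
  classical
  set S : Set (V → ℝ) :=
    {f : V → ℝ | ∃ x : G ≃g G, f = fun v => if v ∈ W₁.image x then (1 : ℝ) else 0} with hSdef
  obtain ⟨t, hts, hspan, hli⟩ := exists_linearIndependent ℝ S
  have htfin : t.Finite := hli.setFinite
  haveI : Fintype t := htfin.fintype
  have hrank : Module.finrank ℝ (Submodule.span ℝ S) = t.toFinset.card := by
    rw [← hspan, finrank_span_set_eq_card hli]
  -- every vertex is in the support of some element of t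
  have hcover : (Finset.univ : Finset V) ⊆
      t.toFinset.biUnion (fun g => Finset.univ.filter (fun v => g v ≠ 0)) := by
    intro v _
    obtain ⟨w, hw⟩ := hne
    obtain ⟨x, hx⟩ := htrans w v
    have hfS : (fun u => if u ∈ W₁.image x then (1 : ℝ) else 0) ∈ S := ⟨x, rfl⟩
    have hmem : (fun u => if u ∈ W₁.image x then (1 : ℝ) else 0) ∈ Submodule.span ℝ t := by
      rw [hspan]; exact Submodule.subset_span hfS
    have hv : v ∈ W₁.image x := Finset.mem_image.mpr ⟨w, hw, hx⟩
    have hex : ∃ g ∈ t, g v ≠ 0 := by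
      by_contra h
      push_neg at h
      have hker : Submodule.span ℝ t ≤ LinearMap.ker (LinearMap.proj (R := ℝ)
          (φ := fun _ : V => ℝ) v) := by
        rw [Submodule.span_le]
        intro g hg
        simpa using h g hg
      have := hker hmem
      simp only [LinearMap.mem_ker, LinearMap.proj_apply] at this
      rw [if_pos hv] at this
      exact one_ne_zero this
    obtain ⟨g, hgt, hgv⟩ := hex
    exact Finset.mem_biUnion.mpr ⟨g, Set.mem_toFinset.mpr hgt, by simp [hgv]⟩
  have hsupp : ∀ g ∈ t.toFinset, (Finset.univ.filter (fun v => g v ≠ 0)).card ≤ W₁.card := by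
    intro g hg
    obtain ⟨x, rfl⟩ := hts (Set.mem_toFinset.mp hg)
    have : (Finset.univ.filter (fun v => (if v ∈ W₁.image x then (1 : ℝ) else 0) ≠ 0))
        = W₁.image x := by
      ext v
      simp only [Finset.mem_filter, Finset.mem_univ, true_and]
      by_cases hv : v ∈ W₁.image x
      · rw [if_pos hv]; exact iff_of_true one_ne_zero hv
      · rw [if_neg hv]; exact iff_of_false (by simp) hv
    rw [this]
    exact Finset.card_image_le
  have hcount : Fintype.card V ≤ t.toFinset.card * W₁.card := by
    calc Fintype.card V = (Finset.univ : Finset V).card := rfl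
      _ ≤ (t.toFinset.biUnion (fun g => Finset.univ.filter (fun v => g v ≠ 0))).card :=
          Finset.card_le_card hcover
      _ ≤ ∑ g ∈ t.toFinset, (Finset.univ.filter (fun v => g v ≠ 0)).card :=
          Finset.card_biUnion_le
      _ ≤ ∑ _g ∈ t.toFinset, W₁.card := Finset.sum_le_sum hsupp
      _ = t.toFinset.card * W₁.card := by rw [Finset.sum_const, smul_eq_mul]
  have hW : (0 : ℝ) < W₁.card := by exact_mod_cast hne.card_pos
  rw [div_le_iff₀ hW, hrank]
  exact_mod_cast hcount
end

section
/- Let Cay(G,S) be a normal Cayley graph and H ≤ G a subgroup such that no irreducible character χ appearing in the permutation representation of G on left cosets of H satisfies (1/χ(1))·Σ_{g∈S} χ(g) = a−b. Then any (a,b)-perfect set W₁ in Cay(G,S) satisfies |xH ∩ W₁|/|H| = b/(k−a+b) for every x ∈ G, where k = |S|; in particular k−a+b divides b·|H|. -/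
/-!
Let `F(xH) = |xH ∩ W₁|`, a vector in the permutation module `λ_G^H = ℂ[G/H]`. Counting the edges
between the coset `xH` and `W₁` gives `∑_{g ∈ S} F(gxH) = (a - b) F(xH) + b |H|`, so
`(k - a + b) F - b |H|` lies in the `(a - b)`-eigenspace of `A = ∑_{g ∈ S} λ(g)`. Since `S` is a
union of conjugacy classes, `A` commutes with `G` and this eigenspace is a subrepresentation. If it
were nonzero it would contain an irreducible constituent `χ` of `λ_G^H` on which `A` acts as
`a - b`, so that `∑_{g ∈ S} χ(g) = (a - b) χ(1)`, which the hypothesis forbids. The same argument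
applied to the constant function, an eigenvector for the eigenvalue `k`, gives `k - a + b ≠ 0`.
-/

open Finset CategoryTheory Module

namespace Representation

section Permutation

variable (k : Type*) [Field k] {G : Type*} [Group G] (X : Type*) [MulAction G X]

/-- `λ_G^X`; for `X = G ⧸ H` this is `λ_G^H`. -/
noncomputable def ofMulActionFun : Representation k G (X → k) where
  toFun g := LinearMap.funLeft k k (g⁻¹ • ·)
  map_one' := by ext; simp [LinearMap.funLeft]
  map_mul' g h := by ext; simp [LinearMap.funLeft, mul_smul]

variable {k X}

@[simp]
lemma ofMulActionFun_apply (g : G) (f : X → k) (x : X) :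
    ofMulActionFun k X g f x = f (g⁻¹ • x) := rfl

lemma character_ofMulActionFun [Fintype X] [DecidableEq X] (g : G) :
    (ofMulActionFun k X).character g = #{x : X | g • x = x} := by
  rw [character, LinearMap.trace_eq_matrix_trace k (Pi.basisFun k X), Matrix.trace,
    Finset.natCast_card_filter]
  refine Finset.sum_congr rfl fun x _ => ?_
  simp [Pi.single_apply, inv_smul_eq_iff, eq_comm (a := x)]

end Permutation

lemma commute_sum_of_conj_mem {k G V : Type*} [Field k] [Group G] [AddCommGroup V] [Module k V]
    (ρ : Representation k G V) {S : Finset G} (hS : ∀ g ∈ S, ∀ x : G, x * g * x⁻¹ ∈ S) (x : G) :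
    Commute (ρ x) (∑ g ∈ S, ρ g) := by
  rw [Commute, SemiconjBy, Finset.mul_sum, Finset.sum_mul]
  refine Finset.sum_nbij' (x * · * x⁻¹) (x⁻¹ * · * x) (fun g hg => hS g hg x)
    (fun g hg => by simpa using hS g hg x⁻¹) (fun g _ => by group) (fun g _ => by group)
    (fun g _ => ?_)
  simp only [← map_mul]
  group

end Representation

namespace Subrepresentation

open Representation

variable {k G V : Type*} [Field k] [Group G] [AddCommGroup V] [Module k V]
  {ρ : Representation k G V}

instance [FiniteDimensional k V] : WellFoundedLT (Subrepresentation ρ) :=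
  (show StrictMono (toSubmodule : Subrepresentation ρ → Submodule k V) from
    fun _ _ h => h).wellFoundedLT

def eigenspace (A : Module.End k V) (hA : ∀ g, Commute (ρ g) A) (θ : k) :
    Subrepresentation ρ where
  toSubmodule := A.eigenspace θ
  apply_mem_toSubmodule g v hv := by
    rw [Module.End.mem_eigenspace_iff] at hv ⊢
    rw [← Module.End.mul_apply, ← (hA g).eq, Module.End.mul_apply, hv, map_smul]

lemma isIrreducible_toRepresentation {U : Subrepresentation ρ} (hU : IsAtom U) :
    IsIrreducible U.toRepresentation := by
  obtain ⟨u, huU, hu⟩ := U.toSubmodule.ne_bot_iff.mp fun h => hU.1 (toSubmodule_injective h)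
  refine { exists_pair_ne := ⟨⊥, ⊤, fun h => hu ?_⟩, eq_bot_or_eq_top := fun W => ?_ }
  · have : (⟨u, huU⟩ : U.toSubmodule) ∈ (⊤ : Subrepresentation U.toRepresentation) := trivial
    rw [← h] at this
    exact congrArg Subtype.val ((Submodule.mem_bot k).mp this)
  let W' : Subrepresentation ρ :=
    ⟨W.toSubmodule.map U.toSubmodule.subtype, by
      rintro g _ ⟨w, hw, rfl⟩
      exact ⟨U.toRepresentation g w, W.apply_mem_toSubmodule g hw, rfl⟩⟩
  have hmap_inj := Submodule.map_injective_of_injective U.toSubmodule.injective_subtype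
  rcases hU.le_iff.mp (show W' ≤ U from Submodule.map_subtype_le _ _) with h | h
  · exact .inl <| toSubmodule_injective <| hmap_inj <|
      (congrArg toSubmodule h).trans (Submodule.map_bot _).symm
  · exact .inr <| toSubmodule_injective <| hmap_inj <|
      (congrArg toSubmodule h).trans (Submodule.map_subtype_top _).symm

theorem exists_isIrreducible_le [FiniteDimensional k V] {E : Subrepresentation ρ} (hE : E ≠ ⊥) :
    ∃ U ≤ E, U ≠ ⊥ ∧ IsIrreducible U.toRepresentation := by
  obtain ⟨U, hU, hUE⟩ := (eq_bot_or_exists_atom_le E).resolve_left hE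
  exact ⟨U, hUE, hU.1, isIrreducible_toRepresentation hU⟩

lemma sum_character_eq_of_le_eigenspace {S : Finset G}
    (hS : ∀ g ∈ S, ∀ x : G, x * g * x⁻¹ ∈ S) {θ : k} {U : Subrepresentation ρ}
    [FiniteDimensional k U.toSubmodule]
    (hU : U ≤ eigenspace (∑ g ∈ S, ρ g) (commute_sum_of_conj_mem ρ hS) θ) :
    ∑ g ∈ S, U.toRepresentation.character g = θ * finrank k U.toSubmodule := by
  have hsum : ∑ g ∈ S, U.toRepresentation g = θ • LinearMap.id := by
    ext u
    have hu := Module.End.mem_eigenspace_iff.mp (hU u.2)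
    rw [LinearMap.sum_apply] at hu
    simp only [LinearMap.sum_apply, Submodule.coe_sum, LinearMap.smul_apply, LinearMap.id_apply,
      Submodule.coe_smul]
    exact hu
  simp only [character, ← map_sum, hsum, map_smul, LinearMap.trace_id, smul_eq_mul]

theorem sum_character_mul_character_inv_ne_zero [Fintype G] [CharZero k] [FiniteDimensional k V]
    {U : Subrepresentation ρ} (hU : U ≠ ⊥) :
    ∑ g, ρ.character g * U.toRepresentation.character g⁻¹ ≠ 0 := by
  obtain ⟨u, huU, hu⟩ := U.toSubmodule.ne_bot_iff.mp fun h => hU (toSubmodule_injective h)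
  have hincl : (⟨U.toSubmodule.subtype, fun _ => rfl⟩ : IntertwiningMap U.toRepresentation ρ) ≠ 0 :=
    fun h => hu (by simpa using congrArg (·.toLinearMap ⟨u, huU⟩) h)
  have := invertibleOfNonzero (Nat.cast_ne_zero.mpr Nat.card_pos.ne' : (Nat.card G : k) ≠ 0)
  intro h
  have hrank := card_inv_mul_sum_char_mul_char_eq_finrank U.toRepresentation ρ
  rw [h, mul_zero, eq_comm, Nat.cast_eq_zero, Module.finrank_zero_iff] at hrank
  exact hincl (Subsingleton.elim _ _)

end Subrepresentation

theorem FDRep.simple_of_isIrreducible {k G V : Type} [Field k] [IsAlgClosed k] [Group G]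
    [Finite G] [NeZero (Nat.card G : k)] [AddCommGroup V] [Module k V] [FiniteDimensional k V]
    (ρ : Representation k G V) [ρ.IsIrreducible] : Simple (FDRep.of ρ) := by
  rw [FDRep.simple_iff_end_is_rank_one,
    ← (Representation.linHom.invariantsEquivFDRepHom _ _).finrank_eq]
  exact (Representation.invariantsEquivIntertwiningMap ρ ρ).finrank_eq.trans
    (Representation.IsIrreducible.finrank_intertwiningMap_self ρ)

/-- `∑ g, χ g * |Fix g|` is `|G|` times the multiplicity of `V` in the permutation representation
on `ℂ[X]`, so `V` ranges over its irreducible constituents. -/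
def IsConstituentEigenvalue {G : Type} [Group G] [Fintype G] (S : Finset G) (X : Type)
    [MulAction G X] [Fintype X] [DecidableEq X] (θ : ℂ) : Prop :=
  ∃ V : FDRep ℂ G, Simple V ∧ (∑ g : G, V.character g * (#{x : X | g • x = x} : ℂ)) ≠ 0 ∧
    (∑ g ∈ S, V.character g) / V.character 1 = θ

open Representation in
theorem eq_zero_of_sum_ofMulActionFun_apply_eq_smul {G X : Type} [Group G] [Fintype G]
    [MulAction G X] [Fintype X] [DecidableEq X] {S : Finset G}
    (hS : ∀ g ∈ S, ∀ x : G, x * g * x⁻¹ ∈ S) {θ : ℂ}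
    (hθ : ¬IsConstituentEigenvalue S X θ)
    {v : X → ℂ} (hv : ∑ g ∈ S, ofMulActionFun ℂ X g v = θ • v) : v = 0 := by
  by_contra hv0
  set ρ := ofMulActionFun ℂ X (G := G)
  let E := Subrepresentation.eigenspace (∑ g ∈ S, ρ g) (commute_sum_of_conj_mem ρ hS) θ
  have hE : E ≠ ⊥ := by
    refine fun h => hv0 ?_
    have hvE : v ∈ E.toSubmodule :=
      Module.End.mem_eigenspace_iff.mpr (by rwa [LinearMap.sum_apply])
    rwa [h] at hvE
  obtain ⟨U, hUE, hU, hirr⟩ := Subrepresentation.exists_isIrreducible_le hE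
  have hchar (g : G) : (FDRep.of U.toRepresentation).character g =
      U.toRepresentation.character g := rfl
  refine hθ ⟨FDRep.of U.toRepresentation, FDRep.simple_of_isIrreducible _, ?_, ?_⟩
  · have hfix (g : G) : #{x : X | g⁻¹ • x = x} = #{x : X | g • x = x} := by
      simp_rw [inv_smul_eq_iff, eq_comm (a := _ • _)]
    have hmult := Subrepresentation.sum_character_mul_character_inv_ne_zero hU
    simp only [ρ, character_ofMulActionFun] at hmult
    rw [← Equiv.sum_comp (Equiv.inv G)]
    simpa [hchar, hfix, mul_comm] using hmult
  · have : Nontrivial U.toSubmodule :=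
      Submodule.nontrivial_iff_ne_bot.mpr fun h => hU (Subrepresentation.toSubmodule_injective h)
    simp only [hchar, Subrepresentation.sum_character_eq_of_le_eigenspace hS hUE, char_one]
    exact mul_div_cancel_right₀ _ (Nat.cast_ne_zero.mpr Module.finrank_pos.ne')

section PerfectSet

variable {G : Type*} [Group G]

lemma card_filter_mk_eq [Fintype G] {H : Subgroup G} [DecidableEq (G ⧸ H)] (c : G ⧸ H) :
    #{y : G | ((y : G) : G ⧸ H) = c} = Nat.card H := by
  have := QuotientGroup.card_preimage_mk H {c}
  simp only [Nat.card_coe_set_eq, Nat.card_unique, mul_one] at this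
  rw [← this, ← Set.ncard_coe_finset]
  congr 1
  ext
  simp

variable (W : Finset G) in
def cosetCount (H : Subgroup G) [DecidableEq (G ⧸ H)] (c : G ⧸ H) : ℕ :=
  #{w ∈ W | ((w : G) : G ⧸ H) = c}

lemma cosetCount_mk {W : Finset G} {H : Subgroup G} [DecidableEq (G ⧸ H)]
    [DecidablePred (· ∈ H)] (x : G) : cosetCount W H x = #{w ∈ W | x⁻¹ * w ∈ H} := by
  refine congrArg card (filter_congr fun w _ => ?_)
  rw [eq_comm, QuotientGroup.eq]

variable [DecidableEq G] {S W : Finset G} {a b : ℕ}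

lemma sum_card_filter_mul_mem_add (hA : ∀ y ∈ W, #{g ∈ S | g * y ∈ W} = a)
    (hB : ∀ y ∉ W, #{g ∈ S | g * y ∈ W} = b) (C : Finset G) :
    ∑ g ∈ S, #{y ∈ C | g * y ∈ W} + b * #{y ∈ C | y ∈ W} =
      a * #{y ∈ C | y ∈ W} + b * #C := by
  have hcount : ∑ g ∈ S, #{y ∈ C | g * y ∈ W} = ∑ y ∈ C, #{g ∈ S | g * y ∈ W} := by
    simp only [card_filter]
    exact sum_comm
  rw [hcount, ← sum_filter_add_sum_filter_not C (· ∈ W),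
    sum_congr rfl fun y hy => hA y (mem_filter.mp hy).2,
    sum_congr rfl fun y hy => hB y (mem_filter.mp hy).2,
    ← card_filter_add_card_filter_not (s := C) (· ∈ W)]
  simp only [sum_const, smul_eq_mul]
  ring

variable [Fintype G] {H : Subgroup G} [DecidableEq (G ⧸ H)]

lemma cosetCount_smul (g : G) (c : G ⧸ H) :
    cosetCount W H (g • c) = #{y ∈ {y : G | ((y : G) : G ⧸ H) = c} | g * y ∈ W} := by
  have hmk : ∀ x y : G, ((x * y : G) : G ⧸ H) = x • (y : G ⧸ H) := fun _ _ => rfl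
  refine card_nbij' (g⁻¹ * ·) (g * ·) ?_ ?_ (fun _ _ => by simp) (fun _ _ => by simp)
  · intro y hy
    simp only [coe_filter, mem_filter, Set.mem_ofPred_eq, mem_univ, true_and] at hy ⊢
    rw [hmk, hy.2, inv_smul_smul, mul_inv_cancel_left]
    exact ⟨rfl, hy.1⟩
  · intro y hy
    simp only [coe_filter, mem_filter, Set.mem_ofPred_eq, mem_univ, true_and] at hy ⊢
    rw [hmk, hy.1]
    exact ⟨hy.2, rfl⟩

lemma sum_cosetCount_smul_add (hA : ∀ y ∈ W, #{g ∈ S | g * y ∈ W} = a)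
    (hB : ∀ y ∉ W, #{g ∈ S | g * y ∈ W} = b) (c : G ⧸ H) :
    ∑ g ∈ S, cosetCount W H (g • c) + b * cosetCount W H c =
      a * cosetCount W H c + b * Nat.card H := by
  have hc : cosetCount W H c = #{y ∈ {y : G | ((y : G) : G ⧸ H) = c} | y ∈ W} := by
    simpa using cosetCount_smul (W := W) 1 c
  simp_rw [cosetCount_smul, hc, ← card_filter_mk_eq c]
  exact sum_card_filter_mul_mem_add hA hB _

end PerfectSet

section Spectral

open Representation

variable {G : Type} [Group G] [Fintype G] {S W : Finset G} {a b : ℕ} {H : Subgroup G}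
  [Fintype (G ⧸ H)] [DecidableEq (G ⧸ H)]

theorem card_sub_add_ne_zero (hconj : ∀ g ∈ S, ∀ x : G, x * g * x⁻¹ ∈ S)
    (hH : ¬IsConstituentEigenvalue S (G ⧸ H) ((a : ℂ) - b)) :
    (#S : ℂ) - a + b ≠ 0 := by
  intro h
  have hconst := eq_zero_of_sum_ofMulActionFun_apply_eq_smul hconj hH
    (v := fun _ : G ⧸ H => (1 : ℂ)) (by ext; simp; linear_combination h)
  exact one_ne_zero (congrFun hconst (1 : G))

theorem cosetCount_mul_eq [DecidableEq G] (hinv : ∀ g ∈ S, g⁻¹ ∈ S)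
    (hconj : ∀ g ∈ S, ∀ x : G, x * g * x⁻¹ ∈ S)
    (hH : ¬IsConstituentEigenvalue S (G ⧸ H) ((a : ℂ) - b))
    (hA : ∀ y ∈ W, #{g ∈ S | g * y ∈ W} = a) (hB : ∀ y ∉ W, #{g ∈ S | g * y ∈ W} = b)
    (c : G ⧸ H) : ((#S : ℂ) - a + b) * cosetCount W H c = b * Nat.card H := by
  set F := cosetCount W H
  have hu := eq_zero_of_sum_ofMulActionFun_apply_eq_smul hconj hH
    (v := fun c => ((#S : ℂ) - a + b) * F c - b * Nat.card H) ?_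
  · simpa [sub_eq_zero] using congrFun hu c
  ext c
  simp only [Finset.sum_apply, ofMulActionFun_apply, Pi.smul_apply, smul_eq_mul]
  have hsum_inv : ∑ g ∈ S, (F (g⁻¹ • c) : ℂ) = ∑ g ∈ S, (F (g • c) : ℂ) :=
    Finset.sum_nbij' (·⁻¹) (·⁻¹) hinv hinv (by simp) (by simp) (by simp)
  have key : (∑ g ∈ S, F (g • c) : ℂ) + b * F c = a * F c + b * Nat.card H := by
    exact_mod_cast sum_cosetCount_smul_add hA hB c
  rw [sum_sub_distrib, ← mul_sum, hsum_inv, sum_const, nsmul_eq_mul]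
  linear_combination ((#S : ℂ) - a + b) * key

end Spectral

theorem stmt_18_general {G : Type} [Group G] [Fintype G] [DecidableEq G]
    (S : Finset G) (hinv : ∀ g ∈ S, g⁻¹ ∈ S)
    (hconj : ∀ g ∈ S, ∀ x : G, x * g * x⁻¹ ∈ S)
    (k a b : ℕ) (hk : k = S.card) (ha : a ≤ k - 1)
    (H : Subgroup G) [DecidablePred (· ∈ H)]
    [Fintype (G ⧸ H)] [DecidableEq (G ⧸ H)]
    (hH : ∀ V : FDRep ℂ G, CategoryTheory.Simple V →
      (∑ g : G, V.character g *
        ((Finset.univ.filter (fun c : G ⧸ H => g • c = c)).card : ℂ)) ≠ 0 →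
      (∑ g ∈ S, V.character g) / V.character 1 ≠ (a : ℂ) - b)
    (W₁ : Finset G)
    (hA : ∀ y ∈ W₁, (S.filter (fun g => g * y ∈ W₁)).card = a)
    (hB : ∀ y ∉ W₁, (S.filter (fun g => g * y ∈ W₁)).card = b) :
    (∀ x : G, ((W₁.filter (fun w => x⁻¹ * w ∈ H)).card : ℝ) / (Nat.card H)
        = (b : ℝ) / ((k : ℝ) - a + b)) ∧
    (k - a + b) ∣ b * Nat.card H := by
  have hH' : ¬IsConstituentEigenvalue S (G ⧸ H) ((a : ℂ) - b) :=
    fun ⟨V, hV, hmult, hθ⟩ => hH V hV hmult hθ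
  have hden : (k : ℤ) - a + b ≠ 0 := by exact_mod_cast hk ▸ card_sub_add_ne_zero hconj hH'
  have hcount (x : G) : ((k : ℤ) - a + b) * #{w ∈ W₁ | x⁻¹ * w ∈ H} = b * Nat.card H := by
    rw [← cosetCount_mk]
    exact_mod_cast hk ▸ cosetCount_mul_eq hinv hconj hH' hA hB (x : G ⧸ H)
  refine ⟨fun x => ?_, ?_⟩
  · rw [div_eq_div_iff (by exact_mod_cast Nat.card_pos.ne') (by exact_mod_cast hden)]
    exact_mod_cast (mul_comm _ _).trans (hcount x)
  · have hak : a ≤ k := ha.trans (Nat.sub_le k 1)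
    refine Int.natCast_dvd_natCast.mp ⟨#{w ∈ W₁ | w ∈ H}, ?_⟩
    push_cast [hak]
    simpa using (hcount 1).symm

theorem stmt_18 {G : Type} [Group G] [Fintype G] [DecidableEq G]
    (S : Finset G) (h1 : (1 : G) ∉ S) (hinv : ∀ g ∈ S, g⁻¹ ∈ S)
    (hconj : ∀ g ∈ S, ∀ x : G, x * g * x⁻¹ ∈ S)
    (hgen : Subgroup.closure (S : Set G) = ⊤)
    (k a b : ℕ) (hk : k = S.card) (ha : a ≤ k - 1) (hb : 1 ≤ b) (hbk : b ≤ k)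
    (H : Subgroup G) [DecidablePred (· ∈ H)]
    [Fintype (G ⧸ H)] [DecidableEq (G ⧸ H)]
    (hH : ∀ V : FDRep ℂ G, CategoryTheory.Simple V →
      (∑ g : G, V.character g *
        ((Finset.univ.filter (fun c : G ⧸ H => g • c = c)).card : ℂ)) ≠ 0 →
      (∑ g ∈ S, V.character g) / V.character 1 ≠ (a : ℂ) - b)
    (W₁ : Finset G) (hne : W₁.Nonempty) (hproper : W₁ ≠ Finset.univ)
    (hA : ∀ y ∈ W₁, (S.filter (fun g => g * y ∈ W₁)).card = a)
    (hB : ∀ y ∉ W₁, (S.filter (fun g => g * y ∈ W₁)).card = b) :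
    (∀ x : G, ((W₁.filter (fun w => x⁻¹ * w ∈ H)).card : ℝ) / (Nat.card H)
        = (b : ℝ) / ((k : ℝ) - a + b)) ∧
    (k - a + b) ∣ b * Nat.card H :=
  stmt_18_general S hinv hconj k a b hk ha H hH W₁ hA hB
end

section
/- Let W₁ be a total perfect code (a (1,1)-perfect set) in a Cayley graph Cay(G,S). Then the family {W₁·g : g ∈ S} is a partition of G; consequently the characteristic vectors {𝟙_{W₁g} : g ∈ S} are linearly independent in ℂG. -/
open Finset

theorem stmt_19 {G : Type*} [Group G] [Fintype G] [DecidableEq G]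
    (S : Finset G) (h1 : (1 : G) ∉ S) (hinv : ∀ g ∈ S, g⁻¹ ∈ S)
    (hconj : ∀ g ∈ S, ∀ x : G, x * g * x⁻¹ ∈ S)
    (W₁ : Finset G)
    (htpc : ∀ x : G, (S.filter (fun g => g * x ∈ W₁)).card = 1) :
    (∀ x : G, ∃! g, g ∈ S ∧ x ∈ W₁.image (· * g)) ∧
    LinearIndependent ℂ (fun g : S =>
      (fun x => if x ∈ W₁.image (· * (g : G)) then (1 : ℂ) else 0) : S → G → ℂ) := by
  have key : ∀ x : G, ∃! g, g ∈ S ∧ x ∈ W₁.image (· * g) := by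
    intro x
    obtain ⟨s, hs⟩ := Finset.card_eq_one.mp (htpc x)
    have hsS : s ∈ S ∧ s * x ∈ W₁ := by
      have := Finset.mem_filter.mp (hs ▸ Finset.mem_singleton_self s)
      exact ⟨this.1, this.2⟩
    have huniq : ∀ s' ∈ S, s' * x ∈ W₁ → s' = s := by
      intro s' h1' h2'
      have : s' ∈ S.filter (fun g => g * x ∈ W₁) := Finset.mem_filter.mpr ⟨h1', h2'⟩
      simpa [hs] using this
    refine ⟨x⁻¹ * s⁻¹ * x, ⟨?_, ?_⟩, ?_⟩
    · have := hconj s⁻¹ (hinv s hsS.1) x⁻¹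
      simpa [mul_assoc] using this
    · refine Finset.mem_image.mpr ⟨s * x, hsS.2, ?_⟩
      group
    · rintro g' ⟨hg'S, hg'x⟩
      obtain ⟨w, hw, hwx⟩ := Finset.mem_image.mp hg'x
      have hS' : x * g'⁻¹ * x⁻¹ ∈ S := hconj g'⁻¹ (hinv g' hg'S) x
      have hW' : (x * g'⁻¹ * x⁻¹) * x ∈ W₁ := by
        have : x * g'⁻¹ = w := by rw [← hwx]; group
        simpa [mul_assoc, this] using hw
      have heq := huniq _ hS' hW'
      have : x * g'⁻¹ * x⁻¹ = s := heq
      calc g' = x⁻¹ * (x * g'⁻¹ * x⁻¹)⁻¹ * x := by group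
        _ = x⁻¹ * s⁻¹ * x := by rw [this]
  refine ⟨key, ?_⟩
  rw [Fintype.linearIndependent_iff]
  intro c hc g0
  -- pick x ∈ W₁ * g0
  obtain ⟨s, hs⟩ := Finset.card_eq_one.mp (htpc 1)
  have hsW : s ∈ W₁ := by
    have := Finset.mem_filter.mp (hs ▸ Finset.mem_singleton_self s)
    simpa using this.2
  set x := s * (g0 : G) with hx
  have hxmem : x ∈ W₁.image (· * (g0 : G)) := Finset.mem_image.mpr ⟨s, hsW, rfl⟩
  have hcx := congrFun hc x
  simp only [Finset.sum_apply, Pi.smul_apply, smul_eq_mul, Pi.zero_apply] at hcx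
  have hone : ∀ g : S, g ≠ g0 → c g * (if x ∈ W₁.image (· * (g : G)) then (1:ℂ) else 0) = 0 := by
    intro g hne
    have : x ∉ W₁.image (· * (g : G)) := by
      intro hxg
      obtain ⟨g', hg', hu⟩ := key x
      have e1 : (g : G) = g' := hu _ ⟨g.2, hxg⟩
      have e2 : (g0 : G) = g' := hu _ ⟨g0.2, hxmem⟩
      exact hne (Subtype.ext (e1.trans e2.symm))
    rw [if_neg this, mul_zero]
  have := Finset.sum_eq_single_of_mem g0 (Finset.mem_univ g0)
    (fun g _ hne => hone g hne)
  rw [this] at hcx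
  rw [if_pos hxmem, mul_one] at hcx; exact hcx
end
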